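/- Let n be a finite index type, let K : ℝ → Matrix n n ℝ be a matrix-valued function that is differentiable at ρ₀, such that K ρ is symmetric for every ρ and K ρ₀ is invertible, and let F : n → ℝ be a fixed (design-independent) load vector. Define the displacement U ρ = (K ρ)⁻¹.mulVec F and the compliance C ρ = F ⬝ᵥ U ρ. Then C is differentiable at ρ₀ and its derivative is given by the adjoint (self-adjoint) sensitivity formula deriv C ρ₀ = − (U ρ₀) ⬝ᵥ ((deriv K ρ₀).mulVec (U ρ₀)). -/

import Mathlib

/-!
Inversion is differentiable at a unit with derivative `K' ↦ -K⁻¹ K' K⁻¹`, and `M ↦ F ⬝ᵥ M *ᵥ F`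
is linear, so `C' = -F ⬝ᵥ (K⁻¹ K' K⁻¹) *ᵥ F`. As `K⁻¹` is symmetric, the outer factors move onto
the two copies of `F`, giving `-U ⬝ᵥ K' *ᵥ U`; this is the adjoint choice `λ = -U`.
-/

open Matrix

attribute [local instance] Matrix.frobeniusNormedAddCommGroup Matrix.frobeniusNormedSpace

attribute [local instance] Matrix.frobeniusNormedRing Matrix.frobeniusNormedAlgebra

theorem HasDerivAt.ringInverse {𝕜 R : Type*} [NontriviallyNormedField 𝕜] [NormedRing R]
    [HasSummableGeomSeries R] [NormedAlgebra 𝕜 R] {f : 𝕜 → R} {f' : R} {x : 𝕜}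
    (hf : HasDerivAt f f' x) (hx : IsUnit (f x)) :
    HasDerivAt (fun y => Ring.inverse (f y))
      (-(Ring.inverse (f x) * f' * Ring.inverse (f x))) x := by
  obtain ⟨u, hu⟩ := hx
  have hinv : HasFDerivAt Ring.inverse
      (-ContinuousLinearMap.mulLeftRight 𝕜 R (Ring.inverse (f x)) (Ring.inverse (f x))) (f x) := by
    rw [← hu, Ring.inverse_unit]
    exact hasFDerivAt_ringInverse u
  simpa [mul_assoc, Function.comp_def] using hinv.comp_hasDerivAt x hf

theorem HasDerivAt.matrix_inv {𝕜 n : Type*} [RCLike 𝕜] [Fintype n] [DecidableEq n]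
    {A : 𝕜 → Matrix n n 𝕜} {A' : Matrix n n 𝕜} {x : 𝕜}
    (hA : HasDerivAt A A' x) (hx : IsUnit (A x)) :
    HasDerivAt (fun y => (A y)⁻¹) (-((A x)⁻¹ * A' * (A x)⁻¹)) x := by
  have h := hA.ringInverse hx
  -- `h` is stated for the Frobenius topology; only `exact` sees it is defeq to the product one
  simp only [← nonsing_inv_eq_ringInverse] at h
  exact h

theorem HasDerivAt.dotProduct_mulVec {𝕜 n : Type*} [RCLike 𝕜] [Fintype n]
    {A : 𝕜 → Matrix n n 𝕜} {A' : Matrix n n 𝕜} {x : 𝕜}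
    (hA : HasDerivAt A A' x) (v w : n → 𝕜) :
    HasDerivAt (fun y => v ⬝ᵥ A y *ᵥ w) (v ⬝ᵥ A' *ᵥ w) x := by
  let L : Matrix n n 𝕜 →ₗ[𝕜] 𝕜 :=
    { toFun := fun M => v ⬝ᵥ M *ᵥ w
      map_add' := fun M N => by simp only [add_mulVec, dotProduct_add]
      map_smul' := fun c M => by simp only [smul_mulVec, dotProduct_smul, RingHom.id_apply] }
  exact L.toContinuousLinearMap.hasFDerivAt.comp_hasDerivAt x hA

theorem Matrix.dotProduct_transpose_mul_mul_mulVec {R n : Type*} [CommSemiring R] [Fintype n]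
    (A B : Matrix n n R) (v w : n → R) :
    v ⬝ᵥ (Aᵀ * B * A) *ᵥ w = A *ᵥ v ⬝ᵥ B *ᵥ (A *ᵥ w) := by
  rw [← mulVec_mulVec, ← mulVec_mulVec, dotProduct_mulVec, ← mulVec_transpose, transpose_transpose]

/-- Adjoint sensitivity formula for compliance in SIMP topology optimization:
if the stiffness matrix `K ρ` is symmetric, differentiable at `ρ₀` and invertible at `ρ₀`,
and the load `F` is design-independent, then the compliance `C ρ = F ⬝ᵥ (K ρ)⁻¹.mulVec F`
is differentiable at `ρ₀` with `deriv C ρ₀ = - U ⬝ᵥ (deriv K ρ₀).mulVec U` where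
`U = (K ρ₀)⁻¹.mulVec F`. -/
theorem compliance_adjoint_sensitivity
    {n : Type*} [Fintype n] [DecidableEq n]
    (K : ℝ → Matrix n n ℝ) (ρ₀ : ℝ) (F : n → ℝ)
    (hK : DifferentiableAt ℝ K ρ₀)
    (hsymm : ∀ ρ, (K ρ).IsSymm)
    (hinv : IsUnit (K ρ₀))
    (U : ℝ → n → ℝ) (hU : U = fun ρ => ((K ρ)⁻¹).mulVec F)
    (C : ℝ → ℝ) (hC : C = fun ρ => F ⬝ᵥ U ρ) :
    DifferentiableAt ℝ C ρ₀ ∧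
      deriv C ρ₀ = - (U ρ₀ ⬝ᵥ (deriv K ρ₀).mulVec (U ρ₀)) := by
  subst hC hU
  have hderiv : HasDerivAt (fun ρ => F ⬝ᵥ (K ρ)⁻¹ *ᵥ F)
      (F ⬝ᵥ (-((K ρ₀)⁻¹ * deriv K ρ₀ * (K ρ₀)⁻¹)) *ᵥ F) ρ₀ :=
    (hK.hasDerivAt.matrix_inv hinv).dotProduct_mulVec F F
  have hinv_symm : ((K ρ₀)⁻¹)ᵀ = (K ρ₀)⁻¹ := by
    rw [transpose_nonsing_inv, (hsymm ρ₀).eq]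
  refine ⟨hderiv.differentiableAt, ?_⟩
  rw [hderiv.deriv, neg_mulVec, dotProduct_neg, ← dotProduct_transpose_mul_mul_mulVec, hinv_symm]
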